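/- Let E, S : ℝ^d → ℝ be smooth, J : ℝ^d → Mat(d,ℝ) smooth with J(x) antisymmetric and J(x)∇S(x) = 0 for all x, and K : ℝ^d → Mat(d,ℝ) smooth with K(x) symmetric and K(x)∇E(x) = 0 for all x. Assume div J = 0, i.e. Σ_k ∂_{x_k} J_{jk}(x) = 0 for every j and x. Then the measure e^{S(x)} dx is stationary for the GENERIC SDE: for every smooth compactly supported f : ℝ^d → ℝ, ∫_{ℝ^d} [⟨∇f, J∇E⟩ + ⟨∇f, K∇S⟩ + div(K∇f)](x) e^{S(x)} dx = 0. -/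

import Mathlib

open MeasureTheory Real Matrix

/-- Gradient of `f : ℝ^d → ℝ` w.r.t. the standard inner product. -/
noncomputable def grad {d : ℕ} (f : (Fin d → ℝ) → ℝ) (x : Fin d → ℝ) : Fin d → ℝ :=
  fun i => fderiv ℝ f x (Pi.single i 1)

/-- Partial derivative `∂_{x_k} g (x)`. -/
noncomputable def pd {d : ℕ} (k : Fin d) (g : (Fin d → ℝ) → ℝ) (x : Fin d → ℝ) : ℝ :=
  fderiv ℝ g x (Pi.single k 1)

/-- Divergence of a vector field on ℝ^d: `div X = Σ_k ∂_{x_k} X_k`. -/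
noncomputable def vdiv {d : ℕ} (X : (Fin d → ℝ) → (Fin d → ℝ)) (x : Fin d → ℝ) : ℝ :=
  ∑ k, fderiv ℝ (fun y => X y k) x (Pi.single k 1)

/-!
With the flux `Φ = f J∇E + K∇f` one has `(Lf) e^S = div (e^S Φ)`. Indeed the product rule gives
`div (e^S Φ) = e^S (⟨∇S, Φ⟩ + div Φ)`; here `⟨∇S, f J∇E⟩ = -f ⟨J∇S, ∇E⟩ = 0`,
`⟨∇S, K∇f⟩ = ⟨∇f, K∇S⟩` by symmetry of `K`, and
`div (J∇E) = Σ_k (Σ_j ∂_j J_jk) ∂_k E + Σ_jk J_jk ∂_j ∂_k E` vanishes: the columns of `J` are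
divergence-free because its rows are and `J` is antisymmetric, and an antisymmetric matrix
contracted with the symmetric Hessian of `E` gives zero. Since `e^S Φ` is compactly supported,
its divergence integrates to zero.
-/

namespace Matrix

variable {n R : Type*} [Fintype n]

theorem sum_sum_mul_eq_zero_of_transpose_eq_neg [CommRing R] [NoZeroDivisors R] [CharZero R]
    {A H : Matrix n n R} (hA : Aᵀ = -A) (hH : Hᵀ = H) :
    ∑ j, ∑ k, A j k * H j k = 0 := by
  refine self_eq_neg.mp ?_
  calc ∑ j, ∑ k, A j k * H j k = ∑ k, ∑ j, A j k * H j k := Finset.sum_comm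
    _ = ∑ k, ∑ j, -(A k j * H k j) := by
      refine Finset.sum_congr rfl fun k _ => Finset.sum_congr rfl fun j _ => ?_
      rw [← transpose_apply A k j, ← transpose_apply H k j, hA, hH, neg_apply, neg_mul]
    _ = -∑ j, ∑ k, A j k * H j k := by simp only [Finset.sum_neg_distrib]

theorem dotProduct_mulVec_eq_zero_of_transpose_eq_neg [CommRing R] {A : Matrix n n R}
    {v : n → R} (hA : Aᵀ = -A) (hv : A *ᵥ v = 0) (w : n → R) : v ⬝ᵥ (A *ᵥ w) = 0 := by
  rw [dotProduct_mulVec, ← mulVec_transpose, hA, neg_mulVec, hv, neg_zero, zero_dotProduct]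

theorem dotProduct_mulVec_comm_of_transpose_eq [CommSemiring R] {A : Matrix n n R}
    (hA : Aᵀ = A) (v w : n → R) : v ⬝ᵥ (A *ᵥ w) = w ⬝ᵥ (A *ᵥ v) := by
  rw [dotProduct_mulVec, ← mulVec_transpose, hA, dotProduct_comm]

end Matrix

section Calculus

variable {d : ℕ} {n : WithTop ℕ∞} {x : Fin d → ℝ}

theorem contDiff_pd {m : WithTop ℕ∞} {u : (Fin d → ℝ) → ℝ} (hu : ContDiff ℝ n u)
    (hmn : m + 1 ≤ n) (k : Fin d) : ContDiff ℝ m (pd k u) :=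
  (hu.fderiv_right hmn).clm_apply contDiff_const

theorem contDiff_grad {m : WithTop ℕ∞} {u : (Fin d → ℝ) → ℝ} (hu : ContDiff ℝ n u)
    (hmn : m + 1 ≤ n) : ContDiff ℝ m (grad u) :=
  contDiff_pi.2 (contDiff_pd hu hmn)

theorem contDiff_mulVec {A : (Fin d → ℝ) → Matrix (Fin d) (Fin d) ℝ}
    {v : (Fin d → ℝ) → Fin d → ℝ} (hA : ∀ i j, ContDiff ℝ n fun y => A y i j)
    (hv : ContDiff ℝ n v) : ContDiff ℝ n fun y => A y *ᵥ v y :=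
  contDiff_pi.2 fun i => show ContDiff ℝ n fun y => ∑ j, A y i j * v y j from
    ContDiff.sum fun j _ => (hA i j).mul (contDiff_pi.1 hv j)

theorem differentiableAt_mulVec {A : (Fin d → ℝ) → Matrix (Fin d) (Fin d) ℝ}
    {v : (Fin d → ℝ) → Fin d → ℝ} (hA : ∀ i j, DifferentiableAt ℝ (fun y => A y i j) x)
    (hv : DifferentiableAt ℝ v x) : DifferentiableAt ℝ (fun y => A y *ᵥ v y) x :=
  differentiableAt_pi.2 fun i =>
    show DifferentiableAt ℝ (fun y => ∑ j, A y i j * v y j) x from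
      DifferentiableAt.fun_sum fun j _ => (hA i j).mul (differentiableAt_pi.1 hv j)

theorem HasCompactSupport.grad {u : (Fin d → ℝ) → ℝ} (hu : HasCompactSupport u) :
    HasCompactSupport (grad u) :=
  (hu.fderiv (𝕜 := ℝ)).mono fun y hy h => hy (by ext i; simp [_root_.grad, h])

theorem HasCompactSupport.mulVec {A : (Fin d → ℝ) → Matrix (Fin d) (Fin d) ℝ}
    {v : (Fin d → ℝ) → Fin d → ℝ} (hv : HasCompactSupport v) :
    HasCompactSupport fun y => A y *ᵥ v y :=
  hv.mono fun y hy h => hy (by simp [h])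

theorem pd_pd_comm {u : (Fin d → ℝ) → ℝ} (hu : ContDiffAt ℝ 2 u x) (j k : Fin d) :
    pd j (pd k u) x = pd k (pd j u) x := by
  have hdu : DifferentiableAt ℝ (fderiv ℝ u) x :=
    (hu.fderiv_right (m := 1) le_rfl).differentiableAt one_ne_zero
  have hsecond (a b : Fin d) :
      pd a (pd b u) x = fderiv ℝ (fderiv ℝ u) x (Pi.single a 1) (Pi.single b 1) := by
    change fderiv ℝ (fun y => fderiv ℝ u y (Pi.single b 1)) x (Pi.single a 1) = _
    simp [fderiv_clm_apply hdu (differentiableAt_const _)]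
  rw [hsecond, hsecond, hu.isSymmSndFDerivAt (by simp)]

theorem differentiableAt_grad {u : (Fin d → ℝ) → ℝ} (hu : ContDiffAt ℝ 2 u x) :
    DifferentiableAt ℝ (grad u) x :=
  differentiableAt_pi.2 fun _ =>
    ((hu.fderiv_right (m := 1) le_rfl).differentiableAt one_ne_zero).clm_apply
      (differentiableAt_const _)

theorem vdiv_add {X Y : (Fin d → ℝ) → Fin d → ℝ} (hX : DifferentiableAt ℝ X x)
    (hY : DifferentiableAt ℝ Y x) : vdiv (fun y => X y + Y y) x = vdiv X x + vdiv Y x := by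
  simp only [vdiv, Pi.add_apply, ← Finset.sum_add_distrib]
  refine Finset.sum_congr rfl fun k _ => ?_
  rw [fderiv_fun_add (differentiableAt_pi.1 hX k) (differentiableAt_pi.1 hY k)]
  rfl

theorem vdiv_smul {g : (Fin d → ℝ) → ℝ} {X : (Fin d → ℝ) → Fin d → ℝ}
    (hg : DifferentiableAt ℝ g x) (hX : DifferentiableAt ℝ X x) :
    vdiv (fun y => g y • X y) x = grad g x ⬝ᵥ X x + g x * vdiv X x := by
  simp only [vdiv, grad, dotProduct, Pi.smul_apply, smul_eq_mul, Finset.mul_sum,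
    ← Finset.sum_add_distrib]
  refine Finset.sum_congr rfl fun k _ => ?_
  simp only [fderiv_fun_mul hg (differentiableAt_pi.1 hX k), _root_.add_apply,
    _root_.smul_apply, smul_eq_mul]
  ring

theorem vdiv_exp_smul {u : (Fin d → ℝ) → ℝ} {X : (Fin d → ℝ) → Fin d → ℝ}
    (hu : DifferentiableAt ℝ u x) (hX : DifferentiableAt ℝ X x) :
    vdiv (fun y => exp (u y) • X y) x = exp (u x) * (grad u x ⬝ᵥ X x + vdiv X x) := by
  have hgrad : grad (fun y => exp (u y)) x = exp (u x) • grad u x := by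
    ext i
    simp [grad, fderiv_exp hu]
  rw [vdiv_smul hu.exp hX, hgrad, smul_dotProduct, smul_eq_mul, mul_add]

theorem vdiv_mulVec {A : (Fin d → ℝ) → Matrix (Fin d) (Fin d) ℝ}
    {v : (Fin d → ℝ) → Fin d → ℝ} (hA : ∀ i j, DifferentiableAt ℝ (fun y => A y i j) x)
    (hv : DifferentiableAt ℝ v x) :
    vdiv (fun y => A y *ᵥ v y) x =
      ∑ k, vdiv (fun y j => A y j k) x * v x k + ∑ j, ∑ k, A x j k * pd j (fun y => v y k) x := by
  simp only [vdiv, mulVec, dotProduct, Finset.sum_mul]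
  rw [Finset.sum_comm (γ := Fin d), ← Finset.sum_add_distrib]
  refine Finset.sum_congr rfl fun j _ => ?_
  rw [fderiv_fun_sum (A := fun k y => A y j k * v y k)
      fun k _ => (hA j k).mul (differentiableAt_pi.1 hv k),
    _root_.sum_apply, ← Finset.sum_add_distrib]
  refine Finset.sum_congr rfl fun k _ => ?_
  simp only [fderiv_fun_mul (hA j k) (differentiableAt_pi.1 hv k), pd, _root_.add_apply,
    _root_.smul_apply, smul_eq_mul]
  ring

theorem vdiv_column_eq_zero_of_transpose_eq_neg {A : (Fin d → ℝ) → Matrix (Fin d) (Fin d) ℝ}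
    (hanti : ∀ y, (A y)ᵀ = -A y) (hdiv : ∀ j, vdiv (fun y => A y j) x = 0) (k : Fin d) :
    vdiv (fun y j => A y j k) x = 0 := by
  have hcol : (fun y j => A y j k) = fun y => -A y k := by
    ext y j
    rw [← transpose_apply (A y) k j, hanti y, neg_apply, Pi.neg_apply]
  rw [hcol]
  simpa [vdiv, fderiv_fun_neg] using congrArg Neg.neg (hdiv k)

theorem vdiv_mulVec_grad_eq_zero {A : (Fin d → ℝ) → Matrix (Fin d) (Fin d) ℝ}
    {u : (Fin d → ℝ) → ℝ} (hA : ∀ i j, DifferentiableAt ℝ (fun y => A y i j) x)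
    (hu : ContDiffAt ℝ 2 u x) (hanti : ∀ y, (A y)ᵀ = -A y)
    (hdiv : ∀ j, vdiv (fun y => A y j) x = 0) :
    vdiv (fun y => A y *ᵥ grad u y) x = 0 := by
  rw [vdiv_mulVec hA (differentiableAt_grad hu)]
  simp only [vdiv_column_eq_zero_of_transpose_eq_neg hanti hdiv, zero_mul, Finset.sum_const_zero,
    zero_add]
  exact sum_sum_mul_eq_zero_of_transpose_eq_neg (H := of fun j k => pd j (pd k u) x) (hanti x)
    (by ext j k; exact pd_pd_comm hu k j)

theorem integral_pd_eq_zero {g : (Fin d → ℝ) → ℝ} (hg : ContDiff ℝ 1 g)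
    (hgc : HasCompactSupport g) (k : Fin d) : ∫ x, pd k g x = 0 := by
  have hpd : Integrable fun x => pd k g x :=
    (contDiff_pd (m := 0) hg (by simp) k).continuous.integrable_of_hasCompactSupport
      (hgc.fderiv_apply ℝ (Pi.single k 1))
  have hparts := integral_mul_fderiv_eq_neg_fderiv_mul_of_integrable (f := fun _ => (1 : ℝ))
    (g := g) (v := Pi.single k 1) (μ := volume) (by simp) (by simpa [pd] using hpd)
    (by simpa using hg.continuous.integrable_of_hasCompactSupport hgc)
    (fun _ _ => differentiableAt_const 1) (fun y _ => hg.differentiable one_ne_zero y)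
  simpa [pd] using hparts

theorem integral_vdiv_eq_zero {X : (Fin d → ℝ) → Fin d → ℝ} (hX : ContDiff ℝ 1 X)
    (hXc : HasCompactSupport X) : ∫ x, vdiv X x = 0 := by
  have hcomp : ∀ k, ContDiff ℝ 1 (fun y => X y k) := contDiff_pi.1 hX
  have hcompc : ∀ k, HasCompactSupport (fun y => X y k) :=
    fun k => hXc.mono fun y hy h => hy (by simp [h])
  change ∫ x, ∑ k, pd k (fun y => X y k) x = 0
  rw [integral_finsetSum _ fun k _ =>
    (contDiff_pd (m := 0) (hcomp k) (by simp) k).continuous.integrable_of_hasCompactSupport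
      ((hcompc k).fderiv_apply ℝ (Pi.single k 1))]
  exact Finset.sum_eq_zero fun k _ => integral_pd_eq_zero (hcomp k) (hcompc k) k

end Calculus

section Generic

variable {d : ℕ}

noncomputable def genericGenerator (E S : (Fin d → ℝ) → ℝ)
    (J K : (Fin d → ℝ) → Matrix (Fin d) (Fin d) ℝ) (f : (Fin d → ℝ) → ℝ) (x : Fin d → ℝ) : ℝ :=
  grad f x ⬝ᵥ J x *ᵥ grad E x + grad f x ⬝ᵥ K x *ᵥ grad S x + vdiv (fun y => K y *ᵥ grad f y) x

noncomputable def genericFlux (E : (Fin d → ℝ) → ℝ)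
    (J K : (Fin d → ℝ) → Matrix (Fin d) (Fin d) ℝ) (f : (Fin d → ℝ) → ℝ) (y : Fin d → ℝ) :
    Fin d → ℝ :=
  f y • (J y *ᵥ grad E y) + K y *ᵥ grad f y

theorem genericGenerator_mul_exp_eq_vdiv {E S f : (Fin d → ℝ) → ℝ}
    {J K : (Fin d → ℝ) → Matrix (Fin d) (Fin d) ℝ} {x : Fin d → ℝ}
    (hE : ContDiffAt ℝ 2 E x) (hS : DifferentiableAt ℝ S x)
    (hJ : ∀ i j, DifferentiableAt ℝ (fun y => J y i j) x)
    (hK : ∀ i j, DifferentiableAt ℝ (fun y => K y i j) x) (hf : ContDiffAt ℝ 2 f x)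
    (hJanti : ∀ y, (J y)ᵀ = -J y) (hJS : J x *ᵥ grad S x = 0) (hKsym : (K x)ᵀ = K x)
    (hdivJ : ∀ j, vdiv (fun y => J y j) x = 0) :
    genericGenerator E S J K f x * exp (S x) =
      vdiv (fun y => exp (S y) • genericFlux E J K f y) x := by
  have hf' : DifferentiableAt ℝ f x := hf.differentiableAt two_ne_zero
  have hJE := differentiableAt_mulVec hJ (differentiableAt_grad hE)
  have hKf := differentiableAt_mulVec hK (differentiableAt_grad hf)
  have hfJE : DifferentiableAt ℝ (fun y => f y • (J y *ᵥ grad E y)) x := hf'.smul hJE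
  have hflux : DifferentiableAt ℝ (genericFlux E J K f) x := hfJE.fun_add hKf
  rw [vdiv_exp_smul hS hflux]
  unfold genericFlux
  rw [vdiv_add hfJE hKf, vdiv_smul hf' hJE, vdiv_mulVec_grad_eq_zero hJ hE hJanti hdivJ]
  simp only [genericGenerator, dotProduct_add, dotProduct_smul, smul_eq_mul,
    dotProduct_mulVec_eq_zero_of_transpose_eq_neg (hJanti x) hJS,
    dotProduct_mulVec_comm_of_transpose_eq hKsym (grad S x)]
  ring

end Generic

theorem expS_stationary_of_divJ_zero_general {d : ℕ}
    (E S : (Fin d → ℝ) → ℝ)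
    (J K : (Fin d → ℝ) → Matrix (Fin d) (Fin d) ℝ)
    (hE : ContDiff ℝ (⊤ : ℕ∞) E) (hS : ContDiff ℝ (⊤ : ℕ∞) S)
    (hJ : ∀ i j, ContDiff ℝ (⊤ : ℕ∞) fun x => J x i j)
    (hK : ∀ i j, ContDiff ℝ (⊤ : ℕ∞) fun x => K x i j)
    (hJanti : ∀ x, (J x)ᵀ = -J x)
    (hJS : ∀ x, (J x).mulVec (grad S x) = 0)
    (hKsym : ∀ x, (K x)ᵀ = K x)
    (hdivJ : ∀ (j : Fin d) (x : Fin d → ℝ), ∑ k, pd k (fun y => J y j k) x = 0)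
    (f : (Fin d → ℝ) → ℝ)
    (hf : ContDiff ℝ (⊤ : ℕ∞) f) (hfc : HasCompactSupport f) :
    ∫ x, (grad f x ⬝ᵥ (J x).mulVec (grad E x)
          + grad f x ⬝ᵥ (K x).mulVec (grad S x)
          + vdiv (fun y => (K y).mulVec (grad f y)) x) * Real.exp (S x) = 0 := by
  change ∫ x, genericGenerator E S J K f x * exp (S x) = 0
  have hC2 {u : (Fin d → ℝ) → ℝ} (hu : ContDiff ℝ (⊤ : ℕ∞) u) (x : Fin d → ℝ) :
      ContDiffAt ℝ 2 u x :=
    hu.contDiffAt.of_le (WithTop.coe_le_coe.2 le_top)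
  have hC1 {u : (Fin d → ℝ) → ℝ} (hu : ContDiff ℝ (⊤ : ℕ∞) u) (x : Fin d → ℝ) :
      DifferentiableAt ℝ u x :=
    hu.differentiable (by simp) x
  have hflux : ContDiff ℝ (⊤ : ℕ∞) (genericFlux E J K f) :=
    (hf.smul (contDiff_mulVec hJ (contDiff_grad hE le_rfl))).add
      (contDiff_mulVec hK (contDiff_grad hf le_rfl))
  have hfluxc : HasCompactSupport (genericFlux E J K f) :=
    hfc.smul_right.add hfc.grad.mulVec
  calc ∫ x, genericGenerator E S J K f x * exp (S x)
      = ∫ x, vdiv (fun y => exp (S y) • genericFlux E J K f y) x :=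
        integral_congr_ae <| .of_forall fun x =>
          genericGenerator_mul_exp_eq_vdiv (hC2 hE x) (hC1 hS x) (fun i j => hC1 (hJ i j) x)
            (fun i j => hC1 (hK i j) x) (hC2 hf x) hJanti (hJS x) (hKsym x) (fun j => hdivJ j x)
    _ = 0 :=
        integral_vdiv_eq_zero ((hS.exp.smul hflux).of_le (by simp))
          (hfluxc.mono fun y hy h => hy (by simp [h]))

/-- if `div J = 0` (row-wise), then the measure `e^S dx` is
stationary for the GENERIC SDE: `∫ (Lf) e^S dx = 0` for all `f ∈ C_c^∞`, where
`Lf = ⟨∇f, J∇E⟩ + ⟨∇f, K∇S⟩ + div(K∇f)`. -/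
theorem expS_stationary_of_divJ_zero {d : ℕ}
    (E S : (Fin d → ℝ) → ℝ)
    (J K : (Fin d → ℝ) → Matrix (Fin d) (Fin d) ℝ)
    (hE : ContDiff ℝ (⊤ : ℕ∞) E) (hS : ContDiff ℝ (⊤ : ℕ∞) S)
    (hJ : ∀ i j, ContDiff ℝ (⊤ : ℕ∞) fun x => J x i j)
    (hK : ∀ i j, ContDiff ℝ (⊤ : ℕ∞) fun x => K x i j)
    (hJanti : ∀ x, (J x)ᵀ = -J x)
    (hJS : ∀ x, (J x).mulVec (grad S x) = 0)
    (hKsym : ∀ x, (K x)ᵀ = K x)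
    (hKE : ∀ x, (K x).mulVec (grad E x) = 0)
    (hdivJ : ∀ (j : Fin d) (x : Fin d → ℝ), ∑ k, pd k (fun y => J y j k) x = 0)
    (f : (Fin d → ℝ) → ℝ)
    (hf : ContDiff ℝ (⊤ : ℕ∞) f) (hfc : HasCompactSupport f) :
    ∫ x, (grad f x ⬝ᵥ (J x).mulVec (grad E x)
          + grad f x ⬝ᵥ (K x).mulVec (grad S x)
          + vdiv (fun y => (K y).mulVec (grad f y)) x) * Real.exp (S x) = 0 :=
  expS_stationary_of_divJ_zero_general E S J K hE hS hJ hK hJanti hJS hKsym hdivJ f hf hfc
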